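/- Let G be a connected bipartite graph with bipartition (A,B), 1 ≤ |A| ≤ |B|. Then γ(G) = |A| if and only if both: (a) every support vertex of G in B is adjacent to exactly one leaf, and every non-leaf neighbor of such a support vertex is itself a support vertex; and (b) for any two vertices x, y in A that are neither leaves nor support vertices with d(x,y) = 2, there exist at least two distinct vertices x̄, ȳ in B with N(x̄) = N(ȳ) = {x, y}. -/

import Mathlib

open Finset

variable {V : Type} [Fintype V] [DecidableEq V]

def IsDomSet (G : SimpleGraph V) (D : Finset V) : Prop :=
  ∀ v : V, v ∉ D → ∃ u ∈ D, G.Adj u v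

noncomputable def domNum (G : SimpleGraph V) : ℕ :=
  sInf {n | ∃ D : Finset V, IsDomSet G D ∧ D.card = n}

def IsVertexCover (G : SimpleGraph V) (C : Finset V) : Prop :=
  ∀ ⦃u v : V⦄, G.Adj u v → u ∈ C ∨ v ∈ C

noncomputable def coverNum (G : SimpleGraph V) : ℕ :=
  sInf {n | ∃ C : Finset V, IsVertexCover G C ∧ C.card = n}

def IsIndepFinset (G : SimpleGraph V) (I : Finset V) : Prop :=
  ∀ u ∈ I, ∀ v ∈ I, ¬ G.Adj u v

noncomputable def indepNum (G : SimpleGraph V) : ℕ :=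
  sSup {n | ∃ I : Finset V, IsIndepFinset G I ∧ I.card = n}

def IsLeaf (G : SimpleGraph V) [DecidableRel G.Adj] (v : V) : Prop :=
  G.degree v = 1

def IsSupport (G : SimpleGraph V) [DecidableRel G.Adj] (v : V) : Prop :=
  ∃ u, G.Adj v u ∧ IsLeaf G u

def IsWeakSupport (G : SimpleGraph V) [DecidableRel G.Adj] (v : V) : Prop :=
  ((G.neighborFinset v).filter fun l => G.degree l = 1).card = 1

def IsBipartition (G : SimpleGraph V) (A B : Finset V) : Prop :=
  A ∪ B = Finset.univ ∧ Disjoint A B ∧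
    ∀ ⦃u v : V⦄, G.Adj u v → (u ∈ A ∧ v ∈ B) ∨ (u ∈ B ∧ v ∈ A)

/-!
The side `A` always dominates, so `γ(G) ≤ |A|`. If (a) or (b) fails, two vertices of `A` can be
traded for one vertex `v` of `B`: two leaves of `v`; a leaf of `v` and a neighbour of `v` that is
neither a leaf nor a support vertex; or two such vertices `x, y` at distance two, with `v` a common
neighbour that is the only vertex with neighbourhood `{x, y}`. The resulting set still dominates.

Conversely, under (a) and (b) every dominating set `D` receives an injection `A \ D → D \ A`.
A support vertex goes to one of its leaves. Among the remaining vertices, those with the same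
dominator `d x ∈ D` have a chosen representative `r`; it goes to `d x`, and every other `x` goes
to a vertex `≠ d x` with neighbourhood `{r, x}`, which (b) provides since (a) forces `r` and `x`
to be non-leaves.
-/

open SimpleGraph

lemma SimpleGraph.Preconnected.exists_adj_of_ne {α : Type*} {G : SimpleGraph α}
    (h : G.Preconnected) {u v : α} (huv : u ≠ v) : ∃ w, G.Adj u w :=
  haveI := nontrivial_of_ne u v huv
  h.exists_adj_of_nontrivial u

lemma SimpleGraph.dist_eq_two_iff {α : Type*} {G : SimpleGraph α} {u v : α} :
    G.dist u v = 2 ↔ u ≠ v ∧ ¬ G.Adj u v ∧ (G.commonNeighbors u v).Nonempty := by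
  rw [← edist_eq_two_iff]
  refine ⟨fun h => ?_, fun h => ?_⟩
  · rw [← (Reachable.of_dist_ne_zero (h ▸ two_ne_zero)).coe_dist_eq_edist, h]
    rfl
  · rw [dist, h]
    rfl

section

omit [DecidableEq V]

variable {G : SimpleGraph V} [DecidableRel G.Adj]

lemma IsLeaf.eq_of_adj {l a b : V} (hl : IsLeaf G l) (ha : G.Adj l a) (hb : G.Adj l b) :
    a = b :=
  (degree_eq_one_iff_existsUnique_adj.mp hl).unique ha hb

lemma isSupport_of_forall_adj_eq {b u : V} (hbu : G.Adj b u) (h : ∀ w, G.Adj b w → w = u) :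
    IsSupport G u :=
  ⟨b, hbu.symm, degree_eq_one_iff_existsUnique_adj.mpr ⟨u, hbu, h⟩⟩

lemma isWeakSupport_iff {v : V} (hv : IsSupport G v) :
    IsWeakSupport G v ↔ ∀ a b, G.Adj v a → IsLeaf G a → G.Adj v b → IsLeaf G b → a = b := by
  obtain ⟨l, hvl, hl⟩ := hv
  set s := (G.neighborFinset v).filter fun l => G.degree l = 1
  have hpos : 0 < s.card := card_pos.mpr ⟨l, by simpa [s] using ⟨hvl, hl⟩⟩
  rw [IsWeakSupport, show s.card = 1 ↔ s.card ≤ 1 by omega, card_le_one]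
  simp only [s, mem_filter, mem_neighborFinset, IsLeaf]
  exact ⟨fun h a b ha hal hb hbl => h a ⟨ha, hal⟩ b ⟨hb, hbl⟩,
    fun h a ha b hb => h a b ha.1 ha.2 hb.1 hb.2⟩

end

section

variable {G : SimpleGraph V}

omit [Fintype V] [DecidableEq V] in
lemma domNum_le_card {D : Finset V} (hD : IsDomSet G D) : domNum G ≤ D.card :=
  Nat.sInf_le ⟨D, hD, rfl⟩

omit [DecidableEq V] in
lemma exists_isDomSet_card_eq_domNum (G : SimpleGraph V) :
    ∃ D, IsDomSet G D ∧ D.card = domNum G :=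
  Nat.sInf_mem (s := {n | ∃ D, IsDomSet G D ∧ D.card = n})
    ⟨_, univ, fun v hv => absurd (mem_univ v) hv, rfl⟩

omit [Fintype V] [DecidableEq V] in
lemma IsDomSet.mem_of_forall_adj {D : Finset V} (hD : IsDomSet G D) {v : V}
    (h : ∀ u, G.Adj u v → u ∉ D) : v ∈ D := by
  by_contra hv
  obtain ⟨u, huD, huv⟩ := hD v hv
  exact h u huv huD

omit [Fintype V] in
lemma domNum_lt_card {A P : Finset V} {v : V} (hPA : P ⊆ A) (hP : 2 ≤ P.card)
    (hvP : ∀ p ∈ P, G.Adj v p) (hA : ∀ b ∉ A, b ≠ v → ∃ u ∈ A \ P, G.Adj u b) :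
    domNum G < A.card := by
  have hD : IsDomSet G (insert v (A \ P)) := by
    intro b hb
    rw [mem_insert, not_or, mem_sdiff, not_and_not_right] at hb
    by_cases hbA : b ∈ A
    · exact ⟨v, mem_insert_self _ _, hvP b (hb.2 hbA)⟩
    · obtain ⟨u, hu, hub⟩ := hA b hbA hb.1
      exact ⟨u, mem_insert_of_mem hu, hub⟩
  calc domNum G ≤ (insert v (A \ P)).card := domNum_le_card hD
    _ ≤ (A \ P).card + 1 := card_insert_le _ _
    _ = A.card - P.card + 1 := by rw [card_sdiff_of_subset hPA]
    _ < A.card := by have := card_le_card hPA; omega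

end

section

variable {G : SimpleGraph V} [DecidableRel G.Adj]

/-- `d` picks a dominator, `rep v` a representative of the vertices dominated by `v`, and `w r x` a
vertex with neighbourhood `{r, x}`. -/
def privateNeighbor (d rep : V → V) (w : V → V → V) (x : V) : V :=
  if x = rep (d x) then d x else w (rep (d x)) x

lemma injOn_privateNeighbor {N : Set V} {d rep : V → V} {w : V → V → V}
    (hd : ∀ x ∈ N, G.Adj (d x) x) (hrep : ∀ x ∈ N, rep (d x) ∈ N ∧ d (rep (d x)) = d x)
    (hw : ∀ x ∈ N, ∀ y ∈ N, x ≠ y → d x = d y →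
      w x y ≠ d y ∧ G.neighborFinset (w x y) = {x, y}) :
    N.InjOn (privateNeighbor d rep w) := by
  have hdw : ∀ x ∈ N, ∀ y ∈ N, y ≠ rep (d y) → d x ≠ w (rep (d y)) y := by
    intro x hx y hy hyr he
    obtain ⟨hrN, hrd⟩ := hrep y hy
    obtain ⟨hne, hN⟩ := hw _ hrN y hy (Ne.symm hyr) hrd
    have hmem : x ∈ G.neighborFinset (w (rep (d y)) y) := by
      rw [← he, mem_neighborFinset]
      exact hd x hx
    rw [hN, mem_insert, mem_singleton] at hmem
    refine hne (he ▸ ?_)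
    rcases hmem with rfl | rfl
    exacts [hrd, rfl]
  intro x hx y hy hxy
  simp only [privateNeighbor] at hxy
  split_ifs at hxy with hxr hyr hyr
  · rw [hxr, hyr, hxy]
  · exact absurd hxy (hdw x hx y hy hyr)
  · exact absurd hxy.symm (hdw y hy x hx hxr)
  · obtain ⟨hrN, hrd⟩ := hrep y hy
    have hmem : x ∈ G.neighborFinset (w (rep (d y)) y) := by
      rw [← hxy, ((hw _ (hrep x hx).1 x hx (Ne.symm hxr) (hrep x hx).2).2)]
      simp
    rw [(hw _ hrN y hy (Ne.symm hyr) hrd).2, mem_insert, mem_singleton] at hmem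
    rcases hmem with rfl | rfl
    · exact absurd (by rw [hrd]) hxr
    · rfl

end

/-- Condition (a). -/
def WeakSupportCondition (G : SimpleGraph V) [DecidableRel G.Adj] (B : Finset V) : Prop :=
  ∀ v ∈ B, IsSupport G v →
    IsWeakSupport G v ∧ ∀ u, G.Adj v u → ¬ IsLeaf G u → IsSupport G u

/-- Condition (b). -/
def TwinCondition (G : SimpleGraph V) [DecidableRel G.Adj] (A B : Finset V) : Prop :=
  ∀ x ∈ A, ∀ y ∈ A, ¬ IsLeaf G x → ¬ IsSupport G x → ¬ IsLeaf G y → ¬ IsSupport G y →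
    G.dist x y = 2 →
    ∃ xb ∈ B, ∃ yb ∈ B, xb ≠ yb ∧ G.neighborFinset xb = {x, y} ∧ G.neighborFinset yb = {x, y}

namespace IsBipartition

variable {G : SimpleGraph V} {A B : Finset V}

lemma symm (h : IsBipartition G A B) : IsBipartition G B A :=
  ⟨by rw [union_comm, h.1], h.2.1.symm, fun _ _ huv => (h.2.2 huv).symm⟩

lemma mem_right_of_notMem_left (h : IsBipartition G A B) {v : V} (hv : v ∉ A) : v ∈ B :=
  (mem_union.mp (h.1 ▸ mem_univ v)).resolve_left hv

lemma mem_right_of_adj (h : IsBipartition G A B) {u v : V} (hu : u ∈ A) (huv : G.Adj u v) :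
    v ∈ B :=
  ((h.2.2 huv).resolve_right fun h' => disjoint_left.mp h.2.1 hu h'.1).2

lemma notMem_left_of_adj (h : IsBipartition G A B) {u v : V} (hu : u ∈ A) (huv : G.Adj u v) :
    v ∉ A :=
  disjoint_right.mp h.2.1 (h.mem_right_of_adj hu huv)

lemma isDomSet_left (h : IsBipartition G A B) (hconn : G.Connected) (hA : A.Nonempty) :
    IsDomSet G A := by
  intro v hv
  obtain ⟨a, ha⟩ := hA
  obtain ⟨u, hvu⟩ := hconn.preconnected.exists_adj_of_ne (ne_of_mem_of_not_mem ha hv).symm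
  exact ⟨u, h.symm.mem_right_of_adj (h.mem_right_of_notMem_left hv) hvu, hvu.symm⟩

variable [DecidableRel G.Adj] {D : Finset V}

lemma domNum_lt_of_adj_two_leaves (hbip : IsBipartition G A B) (hconn : G.Connected) {v a b : V}
    (hv : v ∈ B) (hva : G.Adj v a) (ha : IsLeaf G a) (hvb : G.Adj v b) (hb : IsLeaf G b)
    (hab : a ≠ b) : domNum G < A.card := by
  have haA := hbip.symm.mem_right_of_adj hv hva
  refine domNum_lt_card (P := {a, b}) (v := v) ?_ (card_pair hab).ge (by simp [hva, hvb]) ?_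
  · simp [insert_subset_iff, haA, hbip.symm.mem_right_of_adj hv hvb]
  · intro c hc hcv
    obtain ⟨u, hcu⟩ := hconn.preconnected.exists_adj_of_ne (ne_of_mem_of_not_mem haA hc).symm
    refine ⟨u, ?_, hcu.symm⟩
    simp only [mem_sdiff, mem_insert, mem_singleton, not_or]
    refine ⟨hbip.symm.mem_right_of_adj (hbip.mem_right_of_notMem_left hc) hcu, ?_, ?_⟩
    · rintro rfl
      exact hcv (ha.eq_of_adj hcu.symm hva.symm)
    · rintro rfl
      exact hcv (hb.eq_of_adj hcu.symm hvb.symm)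

lemma domNum_lt_of_adj_leaf_of_adj_not_isSupport (hbip : IsBipartition G A B)
    (hconn : G.Connected) {v l u : V} (hv : v ∈ B) (hvl : G.Adj v l) (hl : IsLeaf G l)
    (hvu : G.Adj v u) (hu : ¬ IsLeaf G u) (hus : ¬ IsSupport G u) : domNum G < A.card := by
  have hlA := hbip.symm.mem_right_of_adj hv hvl
  have hlu : l ≠ u := by rintro rfl; exact hu hl
  refine domNum_lt_card (P := {l, u}) (v := v) ?_ (card_pair hlu).ge (by simp [hvl, hvu]) ?_
  · simp [insert_subset_iff, hlA, hbip.symm.mem_right_of_adj hv hvu]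
  · intro c hc hcv
    have hcB := hbip.mem_right_of_notMem_left hc
    by_contra! hall
    obtain ⟨w, hcw⟩ := hconn.preconnected.exists_adj_of_ne (ne_of_mem_of_not_mem hlA hc).symm
    have honly : ∀ w, G.Adj c w → w = u := by
      intro w hcw
      have hwl : w ≠ l := by rintro rfl; exact hcv (hl.eq_of_adj hcw.symm hvl.symm)
      by_contra hwu
      exact hall w (by simp [hbip.symm.mem_right_of_adj hcB hcw, hwl, hwu]) hcw.symm
    exact hus (isSupport_of_forall_adj_eq (honly w hcw ▸ hcw) honly)

lemma exists_common_adj_of_not_two_twins (hbip : IsBipartition G A B) {x y : V} (hx : x ∈ A)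
    (hxy : G.dist x y = 2)
    (h : ¬ ∃ xb ∈ B, ∃ yb ∈ B, xb ≠ yb ∧
      G.neighborFinset xb = {x, y} ∧ G.neighborFinset yb = {x, y}) :
    ∃ w, G.Adj w x ∧ G.Adj w y ∧ ∀ c, G.neighborFinset c = {x, y} → c = w := by
  have hadj : ∀ c, G.neighborFinset c = {x, y} → G.Adj c x ∧ G.Adj c y := fun c hc => by
    simp [← mem_neighborFinset, hc]
  by_cases hex : ∃ w, G.neighborFinset w = {x, y}
  · obtain ⟨w, hw⟩ := hex
    refine ⟨w, (hadj w hw).1, (hadj w hw).2, fun c hc => ?_⟩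
    by_contra hcw
    exact h ⟨c, hbip.mem_right_of_adj hx (hadj c hc).1.symm,
      w, hbip.mem_right_of_adj hx (hadj w hw).1.symm, hcw, hc, hw⟩
  · push Not at hex
    obtain ⟨-, -, m, hm⟩ := dist_eq_two_iff.mp hxy
    rw [mem_commonNeighbors] at hm
    exact ⟨m, hm.1.symm, hm.2.symm, fun c hc => absurd hc (hex c)⟩

lemma domNum_lt_of_dist_eq_two (hbip : IsBipartition G A B) (hconn : G.Connected) {x y : V}
    (hx : x ∈ A) (hy : y ∈ A) (hxs : ¬ IsSupport G x) (hys : ¬ IsSupport G y)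
    (hxy : G.dist x y = 2)
    (h : ¬ ∃ xb ∈ B, ∃ yb ∈ B, xb ≠ yb ∧
      G.neighborFinset xb = {x, y} ∧ G.neighborFinset yb = {x, y}) :
    domNum G < A.card := by
  obtain ⟨w, hwx, hwy, huniq⟩ := hbip.exists_common_adj_of_not_two_twins hx hxy h
  have hne : x ≠ y := (dist_eq_two_iff.mp hxy).1
  refine domNum_lt_card (P := {x, y}) (v := w) (by simp [insert_subset_iff, hx, hy])
    (card_pair hne).ge (by simp [hwx, hwy]) fun c hc hcw => ?_
  by_contra! hall
  have hsub : ∀ u, G.Adj c u → u = x ∨ u = y := fun u hcu => by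
    by_contra! hu
    exact hall u (by simp [hbip.symm.mem_right_of_adj (hbip.mem_right_of_notMem_left hc) hcu,
      hu.1, hu.2]) hcu.symm
  obtain ⟨u, hcu⟩ := hconn.preconnected.exists_adj_of_ne (ne_of_mem_of_not_mem hx hc).symm
  by_cases hcx : G.Adj c x <;> by_cases hcy : G.Adj c y
  · refine hcw (huniq c ?_)
    ext z
    simp only [mem_neighborFinset, mem_insert, mem_singleton]
    exact ⟨hsub z, by rintro (rfl | rfl) <;> assumption⟩
  · exact hxs (isSupport_of_forall_adj_eq hcx fun z hz =>
      (hsub z hz).resolve_right (by rintro rfl; exact hcy hz))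
  · exact hys (isSupport_of_forall_adj_eq hcy fun z hz =>
      (hsub z hz).resolve_left (by rintro rfl; exact hcx hz))
  · rcases hsub u hcu with rfl | rfl
    exacts [hcx hcu, hcy hcu]

lemma not_isLeaf_of_adj_of_adj (hbip : IsBipartition G A B) (ha : WeakSupportCondition G B)
    {v x y : V} (hx : x ∈ A) (hys : ¬ IsSupport G y) (hxy : x ≠ y) (hvx : G.Adj v x)
    (hvy : G.Adj v y) : ¬ IsLeaf G x := by
  intro hxl
  have hvS : IsSupport G v := ⟨x, hvx, hxl⟩
  obtain ⟨hweak, hnonleaf⟩ := ha v (hbip.mem_right_of_adj hx hvx.symm) hvS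
  have hyl : IsLeaf G y := by
    by_contra hyl
    exact hys (hnonleaf y hvy hyl)
  exact hxy ((isWeakSupport_iff hvS).mp hweak x y hvx hxl hvy hyl)

lemma exists_twin_ne (hbip : IsBipartition G A B) (ha : WeakSupportCondition G B)
    (hb : TwinCondition G A B) {v x y : V} (hx : x ∈ A) (hy : y ∈ A) (hxs : ¬ IsSupport G x)
    (hys : ¬ IsSupport G y) (hxy : x ≠ y) (hvx : G.Adj v x) (hvy : G.Adj v y) (u : V) :
    ∃ w, w ≠ u ∧ G.neighborFinset w = {x, y} := by
  have hdist : G.dist x y = 2 := dist_eq_two_iff.mpr ⟨hxy, fun h => hbip.notMem_left_of_adj hx h hy,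
    v, G.mem_commonNeighbors.mpr ⟨hvx.symm, hvy.symm⟩⟩
  obtain ⟨xb, -, yb, -, hne, hxb, hyb⟩ := hb x hx y hy
    (hbip.not_isLeaf_of_adj_of_adj ha hx hys hxy hvx hvy) hxs
    (hbip.not_isLeaf_of_adj_of_adj ha hy hxs hxy.symm hvy hvx) hys hdist
  by_cases hxu : xb = u
  · exact ⟨yb, hxu ▸ hne.symm, hyb⟩
  · exact ⟨xb, hxu, hxb⟩

open Classical in
lemma card_filter_isSupport_le (hbip : IsBipartition G A B) (hD : IsDomSet G D) :
    ((A \ D).filter (IsSupport G)).card ≤ ((D \ A).filter (IsLeaf G)).card := by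
  refine card_le_card_of_forall_subsingleton G.Adj (fun x hx => ?_) fun l hl x hx y hy => ?_
  · obtain ⟨⟨hxA, hxD⟩, l, hxl, hl⟩ := by simpa using hx
    have hlD : l ∈ D := hD.mem_of_forall_adj fun u hu => hl.eq_of_adj hu.symm hxl.symm ▸ hxD
    exact ⟨l, by simp [hlD, hbip.notMem_left_of_adj hxA hxl, hl], hxl⟩
  · exact (mem_filter.mp hl).2.eq_of_adj hx.2.symm hy.2.symm

open Classical in
lemma card_filter_not_isSupport_le (hbip : IsBipartition G A B) (ha : WeakSupportCondition G B)
    (hb : TwinCondition G A B) (hD : IsDomSet G D) :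
    ((A \ D).filter (¬ IsSupport G ·)).card ≤ ((D \ A).filter (¬ IsLeaf G ·)).card := by
  set N := (A \ D).filter (¬ IsSupport G ·)
  have hN : ∀ x ∈ N, x ∈ A ∧ x ∉ D ∧ ¬ IsSupport G x := fun x hx => by
    simpa [N, and_assoc] using hx
  choose! d hdD hdx using id hD
  obtain ⟨rep, hrep⟩ : ∃ rep : V → V, ∀ x ∈ N, rep (d x) ∈ N ∧ d (rep (d x)) = d x := by
    by_cases hV : Nonempty V
    · exact ⟨Function.invFunOn d N, fun x hx =>
        ⟨Function.invFunOn_mem ⟨x, hx, rfl⟩, Function.invFunOn_eq ⟨x, hx, rfl⟩⟩⟩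
    · exact ⟨id, fun x => absurd ⟨x⟩ hV⟩
  have htwin : ∀ x ∈ N, ∀ y ∈ N, x ≠ y → d x = d y →
      ∃ w, w ≠ d y ∧ G.neighborFinset w = {x, y} := fun x hx y hy hxy hdxy =>
    hbip.exists_twin_ne ha hb (hN x hx).1 (hN y hy).1 (hN x hx).2.2 (hN y hy).2.2 hxy
      (hdxy ▸ hdx x (hN x hx).2.1) (hdx y (hN y hy).2.1) (d y)
  choose! w hw using htwin
  refine card_le_card_of_injOn (privateNeighbor d rep w) (fun x hx => ?_)
    (injOn_privateNeighbor (fun x hx => hdx x (hN x hx).2.1) hrep hw)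
  obtain ⟨hxA, hxD, hxs⟩ := hN x hx
  simp only [privateNeighbor, coe_filter, Set.mem_ofPred_eq, mem_sdiff]
  split_ifs with hxr
  · refine ⟨⟨hdD x hxD, hbip.notMem_left_of_adj hxA (hdx x hxD).symm⟩, fun hl => hxs ?_⟩
    exact ⟨d x, (hdx x hxD).symm, hl⟩
  · obtain ⟨hrN, hrd⟩ := hrep x hx
    obtain ⟨-, hwN⟩ := hw _ hrN x hx (Ne.symm hxr) hrd
    have hwx : G.Adj (w (rep (d x)) x) x := by
      rw [← mem_neighborFinset, hwN]
      simp
    refine ⟨⟨hD.mem_of_forall_adj fun u hu => ?_, hbip.notMem_left_of_adj hxA hwx.symm⟩, ?_⟩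
    · rw [adj_comm, ← mem_neighborFinset, hwN, mem_insert, mem_singleton] at hu
      rcases hu with rfl | rfl
      exacts [(hN _ hrN).2.1, hxD]
    · rw [IsLeaf, ← card_neighborFinset_eq_degree, hwN, card_pair (Ne.symm hxr)]
      decide

lemma card_left_le_of_isDomSet (hbip : IsBipartition G A B) (ha : WeakSupportCondition G B)
    (hb : TwinCondition G A B) (hD : IsDomSet G D) : A.card ≤ D.card := by
  classical
  rw [← card_sdiff_le_card_sdiff_iff, ← card_filter_add_card_filter_not (s := A \ D) (IsSupport G),
    ← card_filter_add_card_filter_not (s := D \ A) (IsLeaf G)]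
  exact add_le_add (hbip.card_filter_isSupport_le hD) (hbip.card_filter_not_isSupport_le ha hb hD)

end IsBipartition

theorem bipartite_domNum_eq_smaller_side_characterization_general (G : SimpleGraph V)
    [DecidableRel G.Adj] (A B : Finset V) (hconn : G.Connected)
    (hbip : IsBipartition G A B) (hA : 1 ≤ A.card) :
    domNum G = A.card ↔
      ((∀ v ∈ B, IsSupport G v →
          IsWeakSupport G v ∧ ∀ u, G.Adj v u → ¬ IsLeaf G u → IsSupport G u) ∧
       (∀ x ∈ A, ∀ y ∈ A, ¬ IsLeaf G x → ¬ IsSupport G x → ¬ IsLeaf G y → ¬ IsSupport G y →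
          G.dist x y = 2 →
          ∃ xb ∈ B, ∃ yb ∈ B, xb ≠ yb ∧
            G.neighborFinset xb = {x, y} ∧ G.neighborFinset yb = {x, y})) := by
  have hle : domNum G ≤ A.card := domNum_le_card (hbip.isDomSet_left hconn (card_pos.mp hA))
  constructor
  · intro hγ
    have hnlt : ¬ domNum G < A.card := hγ.not_lt
    refine ⟨fun v hv hvS => ⟨(isWeakSupport_iff hvS).mpr fun a b hva ha hvb hb => ?_,
      fun u hvu hu => ?_⟩, fun x hx y hy _ hxs _ hys hxy => ?_⟩
    · by_contra hab
      exact hnlt (hbip.domNum_lt_of_adj_two_leaves hconn hv hva ha hvb hb hab)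
    · by_contra hus
      obtain ⟨l, hvl, hl⟩ := hvS
      exact hnlt (hbip.domNum_lt_of_adj_leaf_of_adj_not_isSupport hconn hv hvl hl hvu hu hus)
    · by_contra h
      exact hnlt (hbip.domNum_lt_of_dist_eq_two hconn hx hy hxs hys hxy h)
  · rintro ⟨ha, hb⟩
    obtain ⟨D, hD, hDcard⟩ := exists_isDomSet_card_eq_domNum G
    exact le_antisymm hle (hDcard ▸ hbip.card_left_le_of_isDomSet ha hb hD)

theorem bipartite_domNum_eq_smaller_side_characterization (G : SimpleGraph V)
    [DecidableRel G.Adj] (A B : Finset V) (hconn : G.Connected)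
    (hbip : IsBipartition G A B) (hA : 1 ≤ A.card) (hAB : A.card ≤ B.card) :
    domNum G = A.card ↔
      ((∀ v ∈ B, IsSupport G v →
          IsWeakSupport G v ∧ ∀ u, G.Adj v u → ¬ IsLeaf G u → IsSupport G u) ∧
       (∀ x ∈ A, ∀ y ∈ A, ¬ IsLeaf G x → ¬ IsSupport G x → ¬ IsLeaf G y → ¬ IsSupport G y →
          G.dist x y = 2 →
          ∃ xb ∈ B, ∃ yb ∈ B, xb ≠ yb ∧
            G.neighborFinset xb = {x, y} ∧ G.neighborFinset yb = {x, y})) :=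
  bipartite_domNum_eq_smaller_side_characterization_general G A B hconn hbip hA
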